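/- Let ≼ be a preorder on an epistemic space and s, t states with s ⊀∼ t (incomparable). For any data stream sound with respect to s and any n, if every observable in the first n observations contains t, then s and t remain incomparable after iterated lexicographic upgrade along those n observations. -/

import Mathlib

namespace Epi

variable {W : Type*}

/-- The set of observables true at state `s`. -/
def obsAt (O : Set (Set W)) (s : W) : Set (Set W) := {p ∈ O | s ∈ p}

/-- The epistemic-space separation condition: distinct worlds satisfy distinct observables. -/
def Separating (O : Set (Set W)) : Prop := ∀ s t : W, obsAt O s = obsAt O t → s = t

/-- `≼`-minimal elements of a set `X`. -/
def minIn (R : W → W → Prop) (X : Set W) : Set W :=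
  {s ∈ X | ∀ t ∈ X, (R s t ∨ R t s) → R s t}

def PreorderOn (R : W → W → Prop) : Prop := Reflexive R ∧ Transitive R

def TotalPreorderOn (R : W → W → Prop) : Prop :=
  Reflexive R ∧ Transitive R ∧ ∀ s t : W, R s t ∨ R t s

/-- Strict part of a preorder. -/
def strictR (R : W → W → Prop) (s t : W) : Prop := R s t ∧ ¬ R t s

/-- One-step minimal revision (conservative upgrade) by observable `p`. -/
def miniRev (R : W → W → Prop) (p : Set W) : W → W → Prop :=
  fun s t => (s ∈ minIn R p ∧ t ∉ minIn R p) ∨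
    (R s t ∧ ¬ (t ∈ minIn R p ∧ s ∉ minIn R p))

/-- One-step lexicographic upgrade by observable `p`. -/
def lexRev (R : W → W → Prop) (p : Set W) : W → W → Prop :=
  fun s t => (s ∈ p ∧ t ∈ p ∧ R s t) ∨ (s ∉ p ∧ t ∉ p ∧ R s t) ∨ (s ∈ p ∧ t ∉ p)

/-- Iterated belief revision along a finite data sequence. -/
def iterRev (rev : (W → W → Prop) → Set W → (W → W → Prop))
    (R : W → W → Prop) (σ : List (Set W)) : W → W → Prop :=
  σ.foldl rev R

/-- The initial segment of length `n` of a data stream. -/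
def seg (f : ℕ → Set W) (n : ℕ) : List (Set W) := (List.range n).map f

/-- All elements of the stream are observables. -/
def StreamIn (O : Set (Set W)) (f : ℕ → Set W) : Prop := ∀ n, f n ∈ O

/-- Soundness of a stream w.r.t. `s`. -/
def SoundStream (s : W) (f : ℕ → Set W) : Prop := ∀ n, s ∈ f n

/-- Completeness of a stream w.r.t. `s`. -/
def CompleteStream (O : Set (Set W)) (s : W) (f : ℕ → Set W) : Prop :=
  ∀ p ∈ obsAt O s, ∃ n, f n = p

/-- Canonical learner induced by minimal revision and prior `R`. -/
def miniLearner (R : W → W → Prop) (σ : List (Set W)) : Set W :=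
  minIn (iterRev miniRev R σ) Set.univ

/-- Canonical learner induced by lexicographic upgrade and prior `R`. -/
def lexLearner (R : W → W → Prop) (σ : List (Set W)) : Set W :=
  minIn (iterRev lexRev R σ) Set.univ

/-- Canonical learner induced by conditioning and prior `R`:
minimal elements among the worlds surviving all observations in `σ`. -/
def condLearner (R : W → W → Prop) (σ : List (Set W)) : Set W :=
  minIn R {w | ∀ p ∈ σ, w ∈ p}

/-- A learner identifies state `s` in the limit. -/
def IdentifiesInLimit (O : Set (Set W)) (L : List (Set W) → Set W) (s : W) : Prop :=
  ∀ f : ℕ → Set W, StreamIn O f → SoundStream s f → CompleteStream O s f →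
    ∃ n, ∀ k, n ≤ k → L (seg f k) = {s}

/-- Finite identification: the learner makes exactly one guess, and it is correct. -/
def FinitelyIdentifies (O : Set (Set W)) (L : List (Set W) → Option W) (s : W) : Prop :=
  ∀ f : ℕ → Set W, StreamIn O f → SoundStream s f → CompleteStream O s f →
    ∃ n, L (seg f n) = some s ∧ ∀ m, m ≠ n → L (seg f m) = none

/-- A definite finite tell-tale map. -/
def DFTTMap (O : Set (Set W)) (D : W → Set (Set W)) : Prop :=
  ∀ s : W, (D s).Finite ∧ D s ⊆ obsAt O s ∧ ∀ t : W, D s ⊆ obsAt O t → s = t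

/-- A finite space mini tell-tale map for `R` and the space. -/
def FSMiniTellTaleMap (O : Set (Set W)) (R : W → W → Prop) (F : W → Set (Set W)) : Prop :=
  ∀ s : W, F s ⊆ obsAt O s ∧
    ∃ p ∈ F s, s ∈ minIn R p ∧
      ∀ t : W, t ≠ s → (R s t ∧ R t s) → t ∈ minIn R p →
        ∃ q ∈ F s, s ∈ minIn R q ∧ t ∉ minIn R q

/-- A generalised conditioning tell-tale map for `R` and the space. -/
def GenCondTellTaleMap (O : Set (Set W)) (R : W → W → Prop) (F : W → Set (Set W)) : Prop :=
  ∀ s : W,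
    (F s).Finite ∧ F s ⊆ obsAt O s ∧
    (∀ t : W, (R s t ∨ R t s) → F s ⊆ obsAt O t → s ≠ t → strictR R s t) ∧
    (∀ F' : Set (Set W), F'.Finite → F s ⊆ F' → F' ⊆ obsAt O s →
      ∀ t : W, ¬ (R s t ∨ R t s) → F' ⊆ obsAt O t →
        ∃ v : W, strictR R v t ∧ F' ⊆ obsAt O v)

/-- Fair data stream w.r.t. `s` (finitely many, eventually corrected, errors). -/
def FairStream (O : Set (Set W)) (s : W) (f : ℕ → Set W) : Prop :=
  CompleteStream O s f ∧ (∃ n, ∀ k, n ≤ k → s ∈ f k) ∧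
    (∀ i, s ∉ f i → ∃ k, i < k ∧ f k = (f i)ᶜ)

theorem lexRev_iff_of_mem {R : W → W → Prop} {p : Set W} {s t : W} (hs : s ∈ p) (ht : t ∈ p) :
    lexRev R p s t ↔ R s t := by
  simp [lexRev, hs, ht]

theorem iterRev_lexRev_iff_of_forall_mem {σ : List (Set W)} {s t : W}
    (hσ : ∀ p ∈ σ, s ∈ p ∧ t ∈ p) (R : W → W → Prop) :
    iterRev lexRev R σ s t ↔ R s t := by
  induction σ generalizing R with
  | nil => rfl
  | cons p σ ih =>
    obtain ⟨hs, ht⟩ := hσ p List.mem_cons_self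
    exact (ih (fun q hq => hσ q (List.mem_cons_of_mem p hq)) _).trans (lexRev_iff_of_mem hs ht)

theorem mem_seg {f : ℕ → Set W} {n : ℕ} {p : Set W} : p ∈ seg f n ↔ ∃ k < n, f k = p := by
  simp [seg]

theorem lex_preserves_incomparability_general {W : Type*}
    (R : W → W → Prop)
    (s t : W) (h : ¬ (R s t ∨ R t s))
    (f : ℕ → Set W) (hsound : SoundStream s f)
    (n : ℕ) (ht : ∀ k < n, t ∈ f k) :
    ¬ (iterRev lexRev R (seg f n) s t ∨ iterRev lexRev R (seg f n) t s) := by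
  have hseg : ∀ p ∈ seg f n, s ∈ p ∧ t ∈ p := by
    rintro p hp
    obtain ⟨k, hk, rfl⟩ := mem_seg.mp hp
    exact ⟨hsound k, ht k hk⟩
  rwa [iterRev_lexRev_iff_of_forall_mem hseg, iterRev_lexRev_iff_of_forall_mem
    (fun p hp => (hseg p hp).symm)]

/-- Incomparability of `s` and `t` persists under iterated lexicographic
upgrade along a sound stream for `s`, as long as all observations so far contain `t`. -/
theorem lex_preserves_incomparability {W : Type*} (O : Set (Set W))
    (R : W → W → Prop) (hR : PreorderOn R)
    (s t : W) (h : ¬ (R s t ∨ R t s))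
    (f : ℕ → Set W) (hin : StreamIn O f) (hsound : SoundStream s f)
    (n : ℕ) (ht : ∀ k < n, t ∈ f k) :
    ¬ (iterRev lexRev R (seg f n) s t ∨ iterRev lexRev R (seg f n) t s) :=
  lex_preserves_incomparability_general R s t h f hsound n ht

end Epi
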